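/- The integral over T^2 of |4 - zeta_2 - 3*zeta_1 - zeta_1*zeta_2 + zeta_1^2|^2 / |2 - zeta_1*zeta_2 - zeta_1^2*zeta_2|^2 dm(zeta_1,zeta_2) is finite; that is, the boundary function p_1/p_2, where p_1 = 4 - z_2 - 3*z_1 - z_1*z_2 + z_1^2 and p_2 = 2 - z_1*z_2 - z_1^2*z_2, belongs to L^2(T^2, m). -/

import Mathlib

open MeasureTheory Complex Set Filter Topology MvPolynomial

noncomputable section

/-- The torus `T^2` as a subset of `ℂ × ℂ`. -/
def torus2 : Set (ℂ × ℂ) := {z | ‖z.1‖ = 1 ∧ ‖z.2‖ = 1}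

/-- The open unit bidisc `D^2`. -/
def bidisc : Set (ℂ × ℂ) := {z | ‖z.1‖ < 1 ∧ ‖z.2‖ < 1}

/-- The product Cauchy kernel on the bidisc. -/
def cauchyKer2 (z w : ℂ × ℂ) : ℂ :=
  ((1 - z.1 * (starRingEnd ℂ) w.1) * (1 - z.2 * (starRingEnd ℂ) w.2))⁻¹

/-- The product Poisson kernel on the bidisc. -/
def poissonKer2 (z ζ : ℂ × ℂ) : ℝ :=
  ((1 - ‖z.1‖ ^ 2) / ‖ζ.1 - z.1‖ ^ 2) *
    ((1 - ‖z.2‖ ^ 2) / ‖ζ.2 - z.2‖ ^ 2)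

/-- `σ` is the Clark-Aleksandrov measure of `b : D^2 → D` at parameter `α`. -/
def IsClarkMeasure2 (b : ℂ × ℂ → ℂ) (α : ℂ) (σ : Measure (ℂ × ℂ)) : Prop :=
  IsFiniteMeasure σ ∧ σ torus2ᶜ = 0 ∧
    ∀ z ∈ bidisc, ∫ ζ, poissonKer2 z ζ ∂σ =
      (1 - ‖b z‖ ^ 2) / ‖α - b z‖ ^ 2

/-- Normalized Haar (Lebesgue) measure on the unit circle `T`, as a measure on `ℂ`. -/
def haarCircle : Measure ℂ :=
  (ENNReal.ofReal (2 * Real.pi))⁻¹ •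
    ((volume : Measure ℝ).restrict (Set.Ioc (0 : ℝ) (2 * Real.pi))).map
      (fun t : ℝ => Complex.exp (t * Complex.I))

/-- Normalized Haar (Lebesgue) measure on `T^2`, as a measure on `ℂ × ℂ`. -/
def haarTorus2 : Measure (ℂ × ℂ) :=
  (ENNReal.ofReal (2 * Real.pi))⁻¹ ^ 2 •
    ((volume : Measure (ℝ × ℝ)).restrict
        (Set.Ioc (0 : ℝ) (2 * Real.pi) ×ˢ Set.Ioc (0 : ℝ) (2 * Real.pi))).map
      (fun t : ℝ × ℝ => (Complex.exp (t.1 * Complex.I), Complex.exp (t.2 * Complex.I)))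


/- On `T²` one has `z₁ p₁ = p₂ - (1 - z₁)(z₁² - 2z₁ + 2)`, so `|p₁/p₂|² ≤ 2 + 50 |1 - z₁|²/|p₂|²`.
For fixed `z₁ ≠ 1` on the circle put `a = conj (z₁ + z₁²) / 2`; then `|a| = |1 + z₁|/2 < 1`, and
as a function of `z₂ ∈ T` the quotient `|1 - z₁|²/|p₂|²` is exactly the Poisson kernel
`(1 - |a|²)/|z₂ - a|²`, whose mean over the circle is `1`. Integrating first in `z₂` and then in
`z₁` gives `∫ |p₁/p₂|² dm ≤ 52`. -/

theorem haarTorus2_eq_prod : haarTorus2 = haarCircle.prod haarCircle := by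
  rw [haarCircle, haarTorus2, Measure.prod_smul_left, Measure.prod_smul_right, smul_smul,
    ← pow_two, Measure.map_prod_map _ _ (by fun_prop) (by fun_prop), Measure.prod_restrict,
    ← Measure.volume_eq_prod]
  rfl

theorem haarCircle_univ : haarCircle univ = 1 := by
  rw [haarCircle, Measure.smul_apply, Measure.map_apply (by fun_prop) MeasurableSet.univ,
    preimage_univ, Measure.restrict_apply_univ, Real.volume_Ioc, sub_zero, smul_eq_mul,
    ENNReal.inv_mul_cancel (by simp [Real.pi_pos]) ENNReal.ofReal_ne_top]

instance : IsProbabilityMeasure haarCircle := ⟨haarCircle_univ⟩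

theorem ae_norm_eq_one_haarCircle : ∀ᵐ z ∂haarCircle, ‖z‖ = 1 := by
  refine Measure.ae_smul_measure ?_ _
  rw [ae_map_iff (by fun_prop) (measurableSet_eq_fun (by fun_prop) (by fun_prop))]
  exact .of_forall fun t => Complex.norm_exp_ofReal_mul_I t

theorem lintegral_haarCircle_ofReal {f : ℂ → ℝ} (hf : Measurable f)
    (hfi : CircleIntegrable f 0 1) (hf0 : ∀ z, ‖z‖ = 1 → 0 ≤ f z) :
    ∫⁻ z, ENNReal.ofReal (f z) ∂haarCircle = ENNReal.ofReal (Real.circleAverage f 0 1) := by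
  have hcircleMap : ∀ t : ℝ, circleMap 0 1 t = Complex.exp (t * Complex.I) := fun t => by
    simp [circleMap]
  rw [haarCircle, lintegral_smul_measure, lintegral_map hf.ennreal_ofReal (by fun_prop),
    Real.circleAverage_def, smul_eq_mul, smul_eq_mul,
    ENNReal.ofReal_mul (by positivity : (0 : ℝ) ≤ (2 * Real.pi)⁻¹),
    ENNReal.ofReal_inv_of_pos (by positivity), intervalIntegral.integral_of_le (by positivity),
    ofReal_integral_eq_lintegral_ofReal]
  · simp_rw [hcircleMap]
  · exact (intervalIntegrable_iff_integrableOn_Ioc_of_le (by positivity)).1 hfi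
  · exact .of_forall fun t => hf0 _ (by simp)

theorem lintegral_poissonKernel_haarCircle {a : ℂ} (ha : ‖a‖ < 1) :
    ∫⁻ z, ENNReal.ofReal (poissonKernel 0 a z) ∂haarCircle = 1 := by
  have hmeas : Measurable (poissonKernel 0 a) := by
    unfold poissonKernel; fun_prop
  have hcont : ContinuousOn (poissonKernel 0 a) (Metric.sphere 0 1) := by
    intro z hz
    have : z - a ≠ 0 := sub_ne_zero.2 fun h => by simp_all
    unfold poissonKernel
    fun_prop (disch := simpa)
  have hmean : Real.circleAverage (poissonKernel 0 a) 0 1 = 1 := by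
    have := InnerProductSpace.HarmonicOnNhd.circleAverage_poissonKernel_smul
      (InnerProductSpace.harmonicOnNhd_const (1 : ℝ)) (c := 0) (R := 1) (by simpa using ha)
    rwa [show poissonKernel 0 a • (fun _ ↦ (1 : ℝ)) = poissonKernel 0 a by ext; simp] at this
  rw [lintegral_haarCircle_ofReal hmeas (hcont.circleIntegrable zero_le_one), hmean,
    ENNReal.ofReal_one]
  intro z hz
  rw [poissonKernel_def, sub_zero, sub_zero, hz]
  exact div_nonneg (by nlinarith [norm_nonneg a]) (sq_nonneg _)

theorem sq_div_sq_le_of_le_add {x y d c : ℝ} (hx : 0 ≤ x) (hxd : x ≤ d + c * y) :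
    x ^ 2 / d ^ 2 ≤ 2 + 2 * c ^ 2 * (y ^ 2 / d ^ 2) := by
  rcases eq_or_ne d 0 with rfl | hd
  · simp
  calc x ^ 2 / d ^ 2 ≤ (2 * d ^ 2 + 2 * c ^ 2 * y ^ 2) / d ^ 2 := by
        gcongr; nlinarith [sq_nonneg (d - c * y)]
    _ = 2 + 2 * c ^ 2 * (y ^ 2 / d ^ 2) := by field_simp

theorem norm_one_add_sq_of_norm_eq_one {z : ℂ} (hz : ‖z‖ = 1) :
    ‖1 + z‖ ^ 2 = 4 - ‖1 - z‖ ^ 2 := by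
  have := parallelogram_law_with_norm ℝ (1 : ℂ) z
  rw [norm_one, hz] at this
  linarith

theorem norm_conj_add_sq_div_two {z : ℂ} (hz : ‖z‖ = 1) :
    ‖starRingEnd ℂ (z + z ^ 2) / 2‖ = ‖1 + z‖ / 2 := by
  rw [norm_div, Complex.norm_conj, show z + z ^ 2 = z * (1 + z) by ring, norm_mul, hz, one_mul,
    Complex.norm_two]

theorem norm_p1_le_norm_p2_add {z₁ : ℂ} (z₂ : ℂ) (hz₁ : ‖z₁‖ = 1) :
    ‖4 - z₂ - 3 * z₁ - z₁ * z₂ + z₁ ^ 2‖ ≤ ‖2 - z₁ * z₂ - z₁ ^ 2 * z₂‖ + 5 * ‖1 - z₁‖ := by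
  have hq : ‖z₁ ^ 2 - 2 * z₁ + 2‖ ≤ 5 := calc
    ‖z₁ ^ 2 - 2 * z₁ + 2‖ ≤ ‖z₁ ^ 2‖ + ‖2 * z₁‖ + ‖(2 : ℂ)‖ :=
      (norm_add_le _ _).trans (by gcongr; exact norm_sub_le _ _)
    _ = 5 := by simp [hz₁]; norm_num
  calc ‖4 - z₂ - 3 * z₁ - z₁ * z₂ + z₁ ^ 2‖
      = ‖z₁ * (4 - z₂ - 3 * z₁ - z₁ * z₂ + z₁ ^ 2)‖ := by rw [norm_mul, hz₁, one_mul]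
    _ = ‖(2 - z₁ * z₂ - z₁ ^ 2 * z₂) - (1 - z₁) * (z₁ ^ 2 - 2 * z₁ + 2)‖ := by ring_nf
    _ ≤ ‖2 - z₁ * z₂ - z₁ ^ 2 * z₂‖ + ‖1 - z₁‖ * ‖z₁ ^ 2 - 2 * z₁ + 2‖ :=
      (norm_sub_le _ _).trans_eq (by rw [norm_mul])
    _ ≤ ‖2 - z₁ * z₂ - z₁ ^ 2 * z₂‖ + 5 * ‖1 - z₁‖ := by
      rw [mul_comm 5]; gcongr

theorem norm_one_sub_sq_div_p2_sq_eq_poissonKernel {z₁ z₂ : ℂ} (hz₁ : ‖z₁‖ = 1)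
    (hz₂ : ‖z₂‖ = 1) :
    ‖1 - z₁‖ ^ 2 / ‖2 - z₁ * z₂ - z₁ ^ 2 * z₂‖ ^ 2 =
      poissonKernel 0 (starRingEnd ℂ (z₁ + z₁ ^ 2) / 2) z₂ := by
  set a := starRingEnd ℂ (z₁ + z₁ ^ 2) / 2 with ha
  have hnum : ‖1 - z₁‖ ^ 2 = 4 * (‖z₂‖ ^ 2 - ‖a‖ ^ 2) := by
    rw [ha, norm_conj_add_sq_div_two hz₁, div_pow, norm_one_add_sq_of_norm_eq_one hz₁, hz₂]
    ring
  have hz₂conj : z₂ * starRingEnd ℂ z₂ = 1 := by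
    rw [Complex.mul_conj, Complex.normSq_eq_norm_sq, hz₂]; simp
  have hden : ‖2 - z₁ * z₂ - z₁ ^ 2 * z₂‖ ^ 2 = 4 * ‖z₂ - a‖ ^ 2 := by
    have : 2 - z₁ * z₂ - z₁ ^ 2 * z₂ = 2 * z₂ * starRingEnd ℂ (z₂ - a) := by
      rw [ha, map_sub, map_div₀, Complex.conj_conj, map_ofNat, mul_sub, mul_assoc, hz₂conj]
      ring
    rw [this, norm_mul, norm_mul, Complex.norm_conj, hz₂, Complex.norm_two]
    ring
  rw [poissonKernel_def, sub_zero, sub_zero, hnum, hden, mul_div_mul_left _ _ four_ne_zero]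

theorem lintegral_norm_one_sub_sq_div_p2_sq_le_one {z₁ : ℂ} (hz₁ : ‖z₁‖ = 1) :
    ∫⁻ z₂, ENNReal.ofReal (‖1 - z₁‖ ^ 2 / ‖2 - z₁ * z₂ - z₁ ^ 2 * z₂‖ ^ 2) ∂haarCircle ≤ 1 := by
  rcases eq_or_ne z₁ 1 with rfl | hne
  · simp
  have ha : ‖starRingEnd ℂ (z₁ + z₁ ^ 2) / 2‖ < 1 := by
    have hpos : 0 < ‖1 - z₁‖ := norm_pos_iff.2 (sub_ne_zero.2 hne.symm)
    have hsq := norm_one_add_sq_of_norm_eq_one hz₁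
    rw [norm_conj_add_sq_div_two hz₁, div_lt_one two_pos]
    nlinarith [norm_nonneg (1 + z₁)]
  rw [← lintegral_poissonKernel_haarCircle ha]
  refine (lintegral_congr_ae ?_).le
  filter_upwards [ae_norm_eq_one_haarCircle] with z₂ hz₂
  rw [norm_one_sub_sq_div_p2_sq_eq_poissonKernel hz₁ hz₂]

theorem lintegral_p1_div_p2_sq_haarCircle_le {z₁ : ℂ} (hz₁ : ‖z₁‖ = 1) :
    ∫⁻ z₂, ENNReal.ofReal (‖4 - z₂ - 3 * z₁ - z₁ * z₂ + z₁ ^ 2‖ ^ 2 /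
      ‖2 - z₁ * z₂ - z₁ ^ 2 * z₂‖ ^ 2) ∂haarCircle ≤ 52 := by
  have hmeas : Measurable fun z₂ : ℂ =>
      ENNReal.ofReal (‖1 - z₁‖ ^ 2 / ‖2 - z₁ * z₂ - z₁ ^ 2 * z₂‖ ^ 2) := by fun_prop
  calc _ ≤ ∫⁻ z₂, 2 + 50 * ENNReal.ofReal (‖1 - z₁‖ ^ 2 / ‖2 - z₁ * z₂ - z₁ ^ 2 * z₂‖ ^ 2)
          ∂haarCircle := by
        refine lintegral_mono fun z₂ => ?_
        have hle := sq_div_sq_le_of_le_add (norm_nonneg _) (norm_p1_le_norm_p2_add z₂ hz₁)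
        rw [← ENNReal.ofReal_ofNat 2, ← ENNReal.ofReal_ofNat 50,
          ← ENNReal.ofReal_mul (by norm_num), ← ENNReal.ofReal_add (by norm_num) (by positivity)]
        exact ENNReal.ofReal_le_ofReal (by linarith)
    _ = 2 + 50 * ∫⁻ z₂, ENNReal.ofReal (‖1 - z₁‖ ^ 2 / ‖2 - z₁ * z₂ - z₁ ^ 2 * z₂‖ ^ 2)
          ∂haarCircle := by
        rw [lintegral_add_left measurable_const, lintegral_const_mul _ hmeas, lintegral_const,
          measure_univ, mul_one]
    _ ≤ 2 + 50 * 1 := by gcongr; exact lintegral_norm_one_sub_sq_div_p2_sq_le_one hz₁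
    _ = 52 := by norm_num

theorem lintegral_p1_div_p2_sq_haarTorus2_le :
    ∫⁻ ζ, ENNReal.ofReal (‖(4 - ζ.2 - 3 * ζ.1 - ζ.1 * ζ.2 + ζ.1 ^ 2 : ℂ)‖ ^ 2 /
      ‖(2 - ζ.1 * ζ.2 - ζ.1 ^ 2 * ζ.2 : ℂ)‖ ^ 2) ∂haarTorus2 ≤ 52 := by
  rw [haarTorus2_eq_prod, lintegral_prod _ (by fun_prop)]
  calc _ ≤ ∫⁻ _ : ℂ, 52 ∂haarCircle := by
        refine lintegral_mono_ae ?_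
        filter_upwards [ae_norm_eq_one_haarCircle] with z₁ hz₁
        exact lintegral_p1_div_p2_sq_haarCircle_le hz₁
    _ = 52 := by simp

theorem p1_over_p2_in_L2 :
    (∫⁻ ζ, ENNReal.ofReal
        (‖(4 - ζ.2 - 3 * ζ.1 - ζ.1 * ζ.2 + ζ.1 ^ 2 : ℂ)‖ ^ 2 /
          ‖(2 - ζ.1 * ζ.2 - ζ.1 ^ 2 * ζ.2 : ℂ)‖ ^ 2) ∂haarTorus2) < ⊤ ∧
    MemLp (fun ζ : ℂ × ℂ =>
        (4 - ζ.2 - 3 * ζ.1 - ζ.1 * ζ.2 + ζ.1 ^ 2) /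
          (2 - ζ.1 * ζ.2 - ζ.1 ^ 2 * ζ.2)) 2 haarTorus2 := by
  have hfin := lintegral_p1_div_p2_sq_haarTorus2_le.trans_lt ENNReal.ofNat_lt_top
  refine ⟨hfin, ?_⟩
  have hmeas : AEStronglyMeasurable (fun ζ : ℂ × ℂ =>
      (4 - ζ.2 - 3 * ζ.1 - ζ.1 * ζ.2 + ζ.1 ^ 2) / (2 - ζ.1 * ζ.2 - ζ.1 ^ 2 * ζ.2)) haarTorus2 :=
    Measurable.aestronglyMeasurable (by fun_prop)
  rw [memLp_two_iff_integrable_sq_norm hmeas]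
  refine ⟨hmeas.norm.pow 2, (hasFiniteIntegral_iff_ofReal (.of_forall fun _ => by positivity)).2 ?_⟩
  simpa only [norm_div, div_pow] using hfin
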